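/- arXiv:1706.04502 — 3 statements merged into one kernel-verified Lean document; each statement's English description precedes it below -/
import Mathlib

section
/- Let d ∈ ℕ, α > 0, let γ = (γ_j)_{j≥1} be weights with 0 < γ_j ≤ 1, let n ≥ 2, and let B > 0 be such that ρ_{α,γ}(p,z) > B for all p ∈ P_n and z ∈ Z_p, where each Z_p is a nonempty subset of {1,…,p−1}^d. Then for every sequence a : ℤ^d → ℂ with ∑_{h∈ℤ^d} (r_{α,γ}(h))² |a_h|² ≤ 1 one has (1/|P_n|) ∑_{p∈P_n} (1/|Z_p|) ∑_{z∈Z_p} |∑_{h∈ℤ^d\{0}, h·z ≡ 0 (mod p)} a_h| ≤ ( ∑_{h∈ℤ^d\{0}, r_{α,γ}(h) > B} (ω_n(h)/r_{α,γ}(h))² )^{1/2}, where ω_n(h) := (1/|P_n|) ∑_{p∈P_n} (1/|Z_p|) ∑_{z∈Z_p} 1(h·z ≡ 0 (mod p)). -/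
open scoped BigOperators
open Classical

noncomputable section

/-- The Riemann zeta function for real argument `β > 1`, as a real series. -/
def zetaR (β : ℝ) : ℝ := ∑' n : ℕ, 1 / ((n : ℝ) + 1) ^ β

/-- The weight function `r_{α,γ}(h) = ∏_j max {1, |h_j|^α / γ_j}`. -/
def rwt (d : ℕ) (α : ℝ) (γ : ℕ → ℝ) (h : Fin d → ℤ) : ℝ :=
  ∏ j : Fin d, max 1 (|(h j : ℝ)| ^ α / γ j)

/-- `V_d(β,γ) = 3 ∏_{j=1}^d (1 + 2 γ_j ζ(β))`. -/
def Vd (d : ℕ) (β : ℝ) (γ : ℕ → ℝ) : ℝ :=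
  3 * ∏ j : Fin d, (1 + 2 * γ j * zetaR β)

/-- The set of primes `p` with `⌈n/2⌉ + 1 ≤ p ≤ n`. -/
def Pset (n : ℕ) : Finset ℕ := (Finset.Icc ((n + 1) / 2 + 1) n).filter Nat.Prime

/-- The set of generating vectors `{1,…,p−1}^d`. -/
def genSet (d p : ℕ) : Finset (Fin d → ℕ) := Fintype.piFinset fun _ => Finset.Icc 1 (p - 1)

/-- The nonzero points of the dual lattice: `h ≠ 0` with `h·z ≡ 0 (mod p)`. -/
def dual (d p : ℕ) (z : Fin d → ℕ) : Set (Fin d → ℤ) :=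
  {h | h ≠ 0 ∧ (p : ℤ) ∣ ∑ j, h j * (z j : ℤ)}

/-- `ρ_{α,γ}(p,z) = min { r_{α,γ}(h) : h ∈ dual lattice, h ≠ 0 }`. -/
def rho (d : ℕ) (α : ℝ) (γ : ℕ → ℝ) (p : ℕ) (z : Fin d → ℕ) : ℝ :=
  sInf (rwt d α γ '' dual d p z)

/-- `P_{β,γ}(p,z) = ∑_{h ∈ dual lattice, h ≠ 0} 1 / r_{β,γ}(h)`. -/
def Pqual (d : ℕ) (β : ℝ) (γ : ℕ → ℝ) (p : ℕ) (z : Fin d → ℕ) : ℝ :=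
  ∑' h : dual d p z, 1 / rwt d β γ h.1

/-- The set `Z_p` of good generating vectors. -/
def Zp (d : ℕ) (α : ℝ) (γ : ℕ → ℝ) (p : ℕ) : Finset (Fin d → ℕ) :=
  (genSet d p).filter fun z => ∀ lam ∈ Set.Ioo (0 : ℝ) α,
    ((p : ℝ) / (2 * Vd d (α / lam) fun j => γ j ^ (1 / lam))) ^ lam ≤ rho d α γ p z

/-- The randomized error quantity of the randomized lattice algorithm `M_n`,
applied to a function with Fourier coefficients `a`. -/
def Err (d : ℕ) (α : ℝ) (γ : ℕ → ℝ) (n : ℕ) (a : (Fin d → ℤ) → ℂ) : ℝ :=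
  (1 / ((Pset n).card : ℝ)) * ∑ p ∈ Pset n,
    (1 / ((Zp d α γ p).card : ℝ)) * ∑ z ∈ Zp d α γ p, ‖∑' h : dual d p z, a h.1‖

/-- `ω_n(h)`: the probability that `h` lies in the dual lattice of the randomly chosen
lattice rule. -/
def omegan (d n : ℕ) (Z : ℕ → Finset (Fin d → ℕ)) (h : Fin d → ℤ) : ℝ :=
  (1 / ((Pset n).card : ℝ)) * ∑ p ∈ Pset n,
    (1 / ((Z p).card : ℝ)) * ∑ z ∈ Z p,
      (if (p : ℤ) ∣ ∑ j, h j * (z j : ℤ) then (1 : ℝ) else 0)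

/-!
Each error term is at most `∑_{h ∈ L⊥} |a_h|` over the dual lattice `L⊥` of the rule, and
`ρ(p,z) > B` puts `L⊥` inside `{h ≠ 0 : r(h) > B}`. Averaging over `p` and `z` turns the
indicator of `L⊥` into `ω_n(h)`, and Cauchy–Schwarz applied to
`(ω_n(h) / r(h)) · (r(h) |a_h|)` together with `∑ r(h)² |a_h|² ≤ 1` gives the bound.
-/

open scoped ENNReal

open MeasureTheory in
theorem ENNReal.inner_le_Lp_mul_Lq_tsum {ι : Type*} (f g : ι → ℝ≥0∞) {p q : ℝ}
    (hpq : p.HolderConjugate q) :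
    ∑' i, f i * g i ≤ (∑' i, f i ^ p) ^ (1 / p) * (∑' i, g i ^ q) ^ (1 / q) := by
  let _ : MeasurableSpace ι := ⊤
  simpa only [lintegral_count, Pi.mul_apply] using
    ENNReal.lintegral_mul_le_Lp_mul_Lq Measure.count hpq
      (measurable_from_top (f := f)).aemeasurable (measurable_from_top (f := g)).aemeasurable

theorem tsum_ofReal_mul_enorm_le {ι E : Type*} [SeminormedAddGroup E] {w r : ι → ℝ}
    (hw : ∀ i, 0 ≤ w i) (hr : ∀ i, 0 < r i) (a : ι → E) :
    ∑' i, ENNReal.ofReal (w i) * ‖a i‖ₑ ≤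
      (∑' i, ENNReal.ofReal ((w i / r i) ^ 2)) ^ (1 / 2 : ℝ) *
        (∑' i, ENNReal.ofReal (r i ^ 2 * ‖a i‖ ^ 2)) ^ (1 / 2 : ℝ) := by
  have hsq : ∀ {x : ℝ}, 0 ≤ x → ENNReal.ofReal x ^ (2 : ℝ) = ENNReal.ofReal (x ^ 2) := fun hx => by
    rw [ENNReal.ofReal_rpow_of_nonneg hx zero_le_two, Real.rpow_two]
  have hsplit : ∀ i, ENNReal.ofReal (w i) * ‖a i‖ₑ =
      ENNReal.ofReal (w i / r i) * ENNReal.ofReal (r i * ‖a i‖) := fun i => by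
    rw [← ENNReal.ofReal_mul (div_nonneg (hw i) (hr i).le), ← ofReal_norm,
      ← ENNReal.ofReal_mul (hw i), ← mul_assoc, div_mul_cancel₀ _ (hr i).ne']
  calc ∑' i, ENNReal.ofReal (w i) * ‖a i‖ₑ
      = ∑' i, ENNReal.ofReal (w i / r i) * ENNReal.ofReal (r i * ‖a i‖) := tsum_congr hsplit
    _ ≤ _ := ENNReal.inner_le_Lp_mul_Lq_tsum _ _ Real.HolderConjugate.two_two
    _ = _ := by
      rw [tsum_congr fun i => hsq (div_nonneg (hw i) (hr i).le),
        tsum_congr fun i => hsq (mul_nonneg (hr i).le (norm_nonneg (a i)))]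
      simp_rw [mul_pow]

theorem ENNReal.ofReal_mul_sum_mul_sum {ι κ : Type*} (s : Finset ι) (t : ι → Finset κ) {c : ℝ}
    (hc : 0 ≤ c) {c' : ι → ℝ} (hc' : ∀ i, 0 ≤ c' i) {x : ι → κ → ℝ} (hx : ∀ i k, 0 ≤ x i k) :
    ENNReal.ofReal (c * ∑ i ∈ s, c' i * ∑ k ∈ t i, x i k) =
      ∑ i ∈ s, ∑ k ∈ t i, ENNReal.ofReal (c * c' i) * ENNReal.ofReal (x i k) := by
  simp_rw [Finset.mul_sum, ← mul_assoc]
  rw [ENNReal.ofReal_sum_of_nonneg fun i _ => Finset.sum_nonneg fun k _ =>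
    mul_nonneg (mul_nonneg hc (hc' i)) (hx i k)]
  refine Finset.sum_congr rfl fun i _ => ?_
  rw [ENNReal.ofReal_sum_of_nonneg fun k _ => mul_nonneg (mul_nonneg hc (hc' i)) (hx i k)]
  exact Finset.sum_congr rfl fun k _ => ENNReal.ofReal_mul (mul_nonneg hc (hc' i))

theorem ENNReal.sum_sum_mul_tsum_mul {ι κ β : Type*} (s : Finset ι) (t : ι → Finset κ)
    (w : ι → ℝ≥0∞) (f : ι → κ → β → ℝ≥0∞) (g : β → ℝ≥0∞) :
    ∑ i ∈ s, ∑ k ∈ t i, w i * ∑' b, f i k b * g b =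
      ∑' b, (∑ i ∈ s, ∑ k ∈ t i, w i * f i k b) * g b := by
  simp_rw [Finset.sum_mul, mul_assoc]
  rw [Summable.tsum_finsetSum fun _ _ => ENNReal.summable]
  refine Finset.sum_congr rfl fun i _ => ?_
  rw [Summable.tsum_finsetSum fun _ _ => ENNReal.summable]
  simp_rw [ENNReal.tsum_mul_left]

theorem ENNReal.tsum_subtype_ofReal_le {ι : Type*} {f : ι → ℝ} (hf₀ : ∀ i, 0 ≤ f i)
    (hf : Summable f) (s : Set ι) : ∑' i : s, ENNReal.ofReal (f i) ≤ ENNReal.ofReal (∑' i, f i) :=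
  calc _ ≤ ∑' i, ENNReal.ofReal (f i) :=
        ENNReal.tsum_comp_le_tsum_of_injective Subtype.coe_injective _
    _ = _ := (ENNReal.ofReal_tsum_of_nonneg hf₀ hf).symm

theorem one_le_rwt (d : ℕ) (α : ℝ) (γ : ℕ → ℝ) (h : Fin d → ℤ) : 1 ≤ rwt d α γ h :=
  Finset.one_le_prod fun _ _ => le_max_left _ _

theorem rwt_pos (d : ℕ) (α : ℝ) (γ : ℕ → ℝ) (h : Fin d → ℤ) : 0 < rwt d α γ h :=
  zero_lt_one.trans_le (one_le_rwt d α γ h)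

theorem omegan_nonneg (d n : ℕ) (Z : ℕ → Finset (Fin d → ℕ)) (h : Fin d → ℤ) :
    0 ≤ omegan d n Z h :=
  mul_nonneg (by positivity) <| Finset.sum_nonneg fun _ _ => mul_nonneg (by positivity) <|
    Finset.sum_nonneg fun _ _ => by split_ifs <;> norm_num

theorem dual_subset_of_lt_rho {d : ℕ} {α : ℝ} {γ : ℕ → ℝ} {p : ℕ} {z : Fin d → ℕ} {B : ℝ}
    (hB : B < rho d α γ p z) : dual d p z ⊆ {h | h ≠ 0 ∧ B < rwt d α γ h} := fun _ hh =>
  ⟨hh.1, hB.trans_le <| csInf_le ⟨0, Set.forall_mem_image.2 fun y _ => (rwt_pos d α γ y).le⟩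
    (Set.mem_image_of_mem _ hh)⟩

theorem enorm_tsum_dual_le {E : Type*} [NormedAddCommGroup E] {d p : ℕ} {z : Fin d → ℕ}
    {T : Set (Fin d → ℤ)} (hT : dual d p z ⊆ T) (a : (Fin d → ℤ) → E) :
    ‖∑' h : dual d p z, a h‖ₑ ≤
      ∑' h : T, ENNReal.ofReal (if (p : ℤ) ∣ ∑ j, h.1 j * (z j : ℤ) then 1 else 0) * ‖a h‖ₑ := by
  calc ‖∑' h : dual d p z, a h‖ₑ
      ≤ ∑' h : dual d p z, ‖a h‖ₑ := enorm_tsum_le_tsum_enorm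
    _ = ∑' h : dual d p z, ENNReal.ofReal (if (p : ℤ) ∣ ∑ j, h.1 j * (z j : ℤ) then 1 else 0) *
          ‖a h‖ₑ := tsum_congr fun h => by simp [h.2.2]
    _ ≤ _ := ENNReal.tsum_comp_le_tsum_of_injective (Set.inclusion_injective hT) _

theorem randomized_error_le_omega_sum_general
    (d : ℕ) (α : ℝ)
    (γ : ℕ → ℝ)
    (n : ℕ) (B : ℝ)
    (Z : ℕ → Finset (Fin d → ℕ))
    (hρ : ∀ p ∈ Pset n, ∀ z ∈ Z p, B < rho d α γ p z)
    (a : (Fin d → ℤ) → ℂ)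
    (ha : Summable fun h : Fin d → ℤ => (rwt d α γ h) ^ 2 * ‖a h‖ ^ 2)
    (ha1 : (∑' h : Fin d → ℤ, (rwt d α γ h) ^ 2 * ‖a h‖ ^ 2) ≤ 1) :
    ENNReal.ofReal ((1 / ((Pset n).card : ℝ)) * ∑ p ∈ Pset n,
        (1 / ((Z p).card : ℝ)) * ∑ z ∈ Z p, ‖∑' h : dual d p z, a h.1‖) ≤
      (∑' h : {h : Fin d → ℤ // h ≠ 0 ∧ B < rwt d α γ h},
        ENNReal.ofReal ((omegan d n Z h.1 / rwt d α γ h.1) ^ 2)) ^ (1 / 2 : ℝ) := by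
  set T : Set (Fin d → ℤ) := {h | h ≠ 0 ∧ B < rwt d α γ h}
  set w : ℕ → ℝ≥0∞ := fun p => ENNReal.ofReal (1 / ((Pset n).card : ℝ) * (1 / ((Z p).card : ℝ)))
  set ind : ℕ → (Fin d → ℕ) → (Fin d → ℤ) → ℝ≥0∞ := fun p z h =>
    ENNReal.ofReal (if (p : ℤ) ∣ ∑ j, h j * (z j : ℤ) then 1 else 0)
  have hω : ∀ h, ENNReal.ofReal (omegan d n Z h) = ∑ p ∈ Pset n, ∑ z ∈ Z p, w p * ind p z h :=
    fun h => ENNReal.ofReal_mul_sum_mul_sum _ _ (by positivity) (fun _ => by positivity)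
      fun _ _ => by split_ifs <;> norm_num
  have ha_T : ∑' h : T, ENNReal.ofReal (rwt d α γ h ^ 2 * ‖a h‖ ^ 2) ≤ 1 :=
    (ENNReal.tsum_subtype_ofReal_le (fun _ => by positivity) ha T).trans
      (ENNReal.ofReal_le_one.2 ha1)
  calc _ = ∑ p ∈ Pset n, ∑ z ∈ Z p, w p * ‖∑' h : dual d p z, a h‖ₑ := by
        rw [ENNReal.ofReal_mul_sum_mul_sum _ _ (by positivity) (fun _ => by positivity)
          fun _ _ => norm_nonneg _]
        simp only [w, ofReal_norm]
    _ ≤ ∑ p ∈ Pset n, ∑ z ∈ Z p, w p * ∑' h : T, ind p z h * ‖a h‖ₑ := by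
        gcongr with p hp z hz
        exact enorm_tsum_dual_le (dual_subset_of_lt_rho (hρ p hp z hz)) a
    _ = ∑' h : T, ENNReal.ofReal (omegan d n Z h) * ‖a h‖ₑ := by
        simp_rw [hω]
        exact ENNReal.sum_sum_mul_tsum_mul _ _ _ _ _
    _ ≤ _ := tsum_ofReal_mul_enorm_le (fun h : T => omegan_nonneg d n Z h)
          (fun h : T => rwt_pos d α γ h) fun h : T => a h
    _ ≤ _ := mul_le_of_le_one_right' (ENNReal.rpow_le_one ha_T (by norm_num))

/-- The randomized error of the randomized lattice algorithm is bounded by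
`(∑_{h ≠ 0, r_{α,γ}(h) > B} (ω_n(h)/r_{α,γ}(h))²)^{1/2}` (an inequality in `[0,∞]`). -/
theorem randomized_error_le_omega_sum
    (d : ℕ) (hd : 0 < d) (α : ℝ) (hα : 0 < α)
    (γ : ℕ → ℝ) (hγpos : ∀ j, 0 < γ j) (hγle : ∀ j, γ j ≤ 1)
    (n : ℕ) (hn : 2 ≤ n) (B : ℝ) (hB : 0 < B)
    (Z : ℕ → Finset (Fin d → ℕ))
    (hZsub : ∀ p ∈ Pset n, Z p ⊆ genSet d p)
    (hZne : ∀ p ∈ Pset n, (Z p).Nonempty)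
    (hρ : ∀ p ∈ Pset n, ∀ z ∈ Z p, B < rho d α γ p z)
    (a : (Fin d → ℤ) → ℂ)
    (ha : Summable fun h : Fin d → ℤ => (rwt d α γ h) ^ 2 * ‖a h‖ ^ 2)
    (ha1 : (∑' h : Fin d → ℤ, (rwt d α γ h) ^ 2 * ‖a h‖ ^ 2) ≤ 1) :
    ENNReal.ofReal ((1 / ((Pset n).card : ℝ)) * ∑ p ∈ Pset n,
        (1 / ((Z p).card : ℝ)) * ∑ z ∈ Z p, ‖∑' h : dual d p z, a h.1‖) ≤
      (∑' h : {h : Fin d → ℤ // h ≠ 0 ∧ B < rwt d α γ h},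
        ENNReal.ofReal ((omegan d n Z h.1 / rwt d α γ h.1) ^ 2)) ^ (1 / 2 : ℝ) :=
  randomized_error_le_omega_sum_general d α γ n B Z hρ a ha ha1
end
end

section
/- Let d ∈ ℕ, n ≥ 2, and for each p ∈ P_n let Z_p ⊆ {1,…,p−1}^d satisfy |Z_p| ≥ ⌈(p−1)^d/2⌉. Then for every h ∈ ℤ^d \ {0}, ω_n(h) := (1/|P_n|) ∑_{p∈P_n} (1/|Z_p|) ∑_{z∈Z_p} 1(h·z ≡ 0 (mod p)) satisfies ω_n(h) ≤ (1/|P_n|) ∑_{p∈P_n} 1(h ≡ 0 (mod p)) + 4/n, where h ≡ 0 (mod p) means every component of h is divisible by p. -/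
open scoped BigOperators
open Classical

noncomputable section

/-! If some coordinate `h j₀` is not divisible by `p`, then for each choice of the other
coordinates of `z` at most one value of `z j₀ ∈ {1,…,p−1}` solves `h·z ≡ 0 (mod p)`, so at most
`(p−1)^(d−1)` vectors of `Z_p` do. Since `|Z_p| ≥ (p−1)^d/2`, they form a fraction at most
`2/(p−1) ≤ 4/n` of `Z_p`; when `h ≡ 0 (mod p)` the fraction is at most `1`. Averaging over
`p ∈ P_n` gives the bound. -/

open Finset

theorem card_genSet (d p : ℕ) : #(genSet d p) = (p - 1) ^ d := by
  simp [genSet]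

theorem eq_of_dvd_mul_sub_of_mem_Icc {p a b : ℕ} {c : ℤ} (hp : p.Prime) (hc : ¬ (p : ℤ) ∣ c)
    (ha : a ∈ Icc 1 (p - 1)) (hb : b ∈ Icc 1 (p - 1)) (hdvd : (p : ℤ) ∣ c * a - c * b) :
    a = b := by
  rw [← mul_sub] at hdvd
  have hmod : b ≡ a [MOD p] :=
    Nat.modEq_iff_dvd.2 ((Nat.prime_iff_prime_int.mp hp).dvd_mul.mp hdvd |>.resolve_left hc)
  rw [mem_Icc] at ha hb
  exact (hmod.eq_of_lt_of_lt (by omega) (by omega)).symm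

theorem card_filter_dvd_dot_le {m p : ℕ} (hp : p.Prime) {h : Fin (m + 1) → ℤ}
    {j₀ : Fin (m + 1)} (hj₀ : ¬ (p : ℤ) ∣ h j₀) :
    #((genSet (m + 1) p).filter fun z => (p : ℤ) ∣ ∑ j, h j * (z j : ℤ)) ≤ (p - 1) ^ m := by
  rw [← card_genSet m p]
  refine card_le_card_of_injOn (fun z => z ∘ j₀.succAbove) (fun z hz => ?_) ?_
  · simp only [genSet, coe_filter, Set.mem_ofPred_eq, Fintype.mem_piFinset, mem_coe] at hz ⊢
    exact fun i => hz.1 _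
  · intro z hz z' hz' hzz'
    simp only [genSet, coe_filter, Set.mem_ofPred_eq, Fintype.mem_piFinset] at hz hz'
    have hrest : ∀ i, z (j₀.succAbove i) = z' (j₀.succAbove i) := congrFun hzz'
    -- the two dot products differ only in the `j₀`-th term
    have hj₀_eq : z j₀ = z' j₀ := by
      refine eq_of_dvd_mul_sub_of_mem_Icc hp hj₀ (hz.1 j₀) (hz'.1 j₀) ?_
      have := dvd_sub hz.2 hz'.2
      simp only [Fin.sum_univ_succAbove _ j₀, hrest] at this
      simpa using this
    funext j
    rcases j₀.eq_self_or_eq_succAbove j with rfl | ⟨i, rfl⟩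
    · exact hj₀_eq
    · exact hrest i

theorem card_filter_dvd_dot_div_card_le {d p n : ℕ} (hp : p.Prime) (hn : 0 < n)
    (hpn : n ≤ 2 * (p - 1)) {Z : Finset (Fin d → ℕ)} (hZsub : Z ⊆ genSet d p)
    (hZcard : ((p - 1) ^ d + 1) / 2 ≤ #Z) {h : Fin d → ℤ} {j₀ : Fin d}
    (hj₀ : ¬ (p : ℤ) ∣ h j₀) :
    (#(Z.filter fun z => (p : ℤ) ∣ ∑ j, h j * (z j : ℤ)) : ℝ) / #Z ≤ 4 / n := by
  obtain ⟨m, rfl⟩ : ∃ m, d = m + 1 := Nat.exists_eq_add_one.2 (Fin.pos j₀)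
  have hcount := (card_le_card (filter_subset_filter _ hZsub)).trans
    (card_filter_dvd_dot_le hp hj₀)
  have hpos : 1 ≤ (p - 1) ^ (m + 1) := Nat.one_le_pow _ _ (by have := hp.two_le; omega)
  have key : #(Z.filter fun z => (p : ℤ) ∣ ∑ j, h j * (z j : ℤ)) * n ≤ 4 * #Z :=
    calc _ ≤ (p - 1) ^ m * (2 * (p - 1)) := Nat.mul_le_mul hcount hpn
      _ = 2 * (p - 1) ^ (m + 1) := by ring
      _ ≤ 4 * #Z := by omega
  rw [div_le_div_iff₀ (by norm_cast; omega) (by exact_mod_cast hn)]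
  exact_mod_cast key

theorem inv_card_mul_sum_dvd_dot_le {d p n : ℕ} (hp : p.Prime) (hn : 0 < n)
    (hpn : n ≤ 2 * (p - 1)) {Z : Finset (Fin d → ℕ)} (hZsub : Z ⊆ genSet d p)
    (hZcard : ((p - 1) ^ d + 1) / 2 ≤ #Z) (h : Fin d → ℤ) :
    1 / (#Z : ℝ) * ∑ z ∈ Z, (if (p : ℤ) ∣ ∑ j, h j * (z j : ℤ) then (1 : ℝ) else 0) ≤
      (if ∀ j, (p : ℤ) ∣ h j then (1 : ℝ) else 0) + 4 / n := by
  rw [sum_boole, one_div_mul_eq_div]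
  by_cases hall : ∀ j, (p : ℤ) ∣ h j
  · rw [if_pos hall]
    refine le_add_of_le_of_nonneg (div_le_one_of_le₀ ?_ (by positivity)) (by positivity)
    exact_mod_cast card_filter_le _ _
  · rw [if_neg hall, zero_add]
    obtain ⟨j₀, hj₀⟩ := not_forall.1 hall
    exact card_filter_dvd_dot_div_card_le hp hn hpn hZsub hZcard hj₀

theorem inv_card_mul_sum_le_inv_card_mul_sum_add {ι : Type*} {s : Finset ι} {f g : ι → ℝ}
    {c : ℝ} (hc : 0 ≤ c) (hfg : ∀ i ∈ s, f i ≤ g i + c) :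
    1 / (#s : ℝ) * ∑ i ∈ s, f i ≤ 1 / (#s : ℝ) * ∑ i ∈ s, g i + c := by
  rcases s.eq_empty_or_nonempty with rfl | hs
  · simpa using hc
  calc 1 / (#s : ℝ) * ∑ i ∈ s, f i ≤ 1 / (#s : ℝ) * ∑ i ∈ s, (g i + c) :=
        mul_le_mul_of_nonneg_left (sum_le_sum hfg) (by positivity)
    _ = 1 / (#s : ℝ) * ∑ i ∈ s, g i + c := by
        have : (#s : ℝ) ≠ 0 := by exact_mod_cast hs.card_ne_zero
        rw [sum_add_distrib, sum_const, nsmul_eq_mul, mul_add]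
        field_simp

theorem omegan_le_general
    (d : ℕ) (n : ℕ)
    (Z : ℕ → Finset (Fin d → ℕ))
    (hZsub : ∀ p ∈ Pset n, Z p ⊆ genSet d p)
    (hZcard : ∀ p ∈ Pset n, ((p - 1) ^ d + 1) / 2 ≤ (Z p).card)
    (h : Fin d → ℤ) :
    omegan d n Z h ≤
      (1 / ((Pset n).card : ℝ)) * ∑ p ∈ Pset n,
        (if ∀ j, (p : ℤ) ∣ h j then (1 : ℝ) else 0) + 4 / n := by
  refine inv_card_mul_sum_le_inv_card_mul_sum_add (by positivity) fun p hpP => ?_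
  obtain ⟨hpI, hp⟩ := mem_filter.1 hpP
  have hp2 := hp.two_le
  rw [mem_Icc] at hpI
  exact inv_card_mul_sum_dvd_dot_le hp (by omega) (by omega) (hZsub p hpP) (hZcard p hpP) h

/-- If `|Z_p| ≥ ⌈(p−1)^d/2⌉` for all `p ∈ P_n`, then for every `h ≠ 0`,
`ω_n(h) ≤ (1/|P_n|) ∑_{p ∈ P_n} 1(h ≡ 0 (mod p)) + 4/n`. -/
theorem omegan_le
    (d : ℕ) (hd : 0 < d) (n : ℕ) (hn : 2 ≤ n)
    (Z : ℕ → Finset (Fin d → ℕ))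
    (hZsub : ∀ p ∈ Pset n, Z p ⊆ genSet d p)
    (hZcard : ∀ p ∈ Pset n, ((p - 1) ^ d + 1) / 2 ≤ (Z p).card)
    (h : Fin d → ℤ) (hh : h ≠ 0) :
    omegan d n Z h ≤
      (1 / ((Pset n).card : ℝ)) * ∑ p ∈ Pset n,
        (if ∀ j, (p : ℤ) ∣ h j then (1 : ℝ) else 0) + 4 / n :=
  omegan_le_general d n Z hZsub hZcard h
end
end

section
/- Let d ∈ ℕ, β > 1, c > 1, T ≥ 1, and let γ = (γ_j)_{j≥1} be weights with 0 < γ_j ≤ 1. Then ∑_{h ∈ ℤ^d \ {0}, r_{β,γ}(h) > T} 1/(r_{β,γ}(h))^c ≤ (c/(c+1)) · V_d(β,γ) · 2^{c−1} · T^{1−c}. -/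
set_option maxHeartbeats 1000000


open scoped BigOperators
open Classical

noncomputable section

lemma zetaR_summable {β : ℝ} (hβ : 1 < β) :
    Summable (fun n : ℕ => 1 / ((n : ℝ) + 1) ^ β) := by
  have h := (Real.summable_one_div_nat_rpow (p := β)).mpr hβ
  have h2 := (summable_nat_add_iff (f := fun n : ℕ => 1 / (n : ℝ) ^ β) 1).mpr h
  simpa using h2

lemma zetaR_nonneg {β : ℝ} : 0 ≤ zetaR β :=
  tsum_nonneg fun n => by positivity

lemma coord_phi_ne {β g0 : ℝ} (hβ : 0 ≤ β) (hg : 0 < g0) (hg1 : g0 ≤ 1)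
    {n : ℤ} (hn : n ≠ 0) :
    (max 1 (|(n : ℝ)| ^ β / g0))⁻¹ = g0 * (1 / |(n : ℝ)| ^ β) := by
  have h1 : (1 : ℝ) ≤ |(n : ℝ)| := by
    rw [← Int.cast_abs]
    exact_mod_cast Int.one_le_abs hn
  have h2 : (1 : ℝ) ≤ |(n : ℝ)| ^ β := by
    calc (1 : ℝ) = 1 ^ β := (Real.one_rpow β).symm
    _ ≤ |(n : ℝ)| ^ β := Real.rpow_le_rpow zero_le_one h1 hβ
  have h3 : (1 : ℝ) ≤ |(n : ℝ)| ^ β / g0 := by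
    rw [le_div_iff₀ hg]
    nlinarith
  rw [max_eq_right h3, inv_div, div_eq_mul_one_div]

lemma coord_main {β : ℝ} (hβ : 1 < β) {g0 : ℝ} (hg : 0 < g0) (hg1 : g0 ≤ 1) :
    Summable (fun n : ℤ => (max 1 (|(n : ℝ)| ^ β / g0))⁻¹) ∧
      ∑' n : ℤ, (max 1 (|(n : ℝ)| ^ β / g0))⁻¹ = 1 + 2 * g0 * zetaR β := by
  have hβ0 : (0 : ℝ) ≤ β := by linarith
  set φ : ℤ → ℝ := fun n => (max 1 (|(n : ℝ)| ^ β / g0))⁻¹ with hφdef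
  have hz := zetaR_summable hβ
  have hφ0 : φ (0 : ℤ) = 1 := by
    simp [hφdef, Real.zero_rpow (by linarith : β ≠ 0), zero_div]
  have hsucc : ∀ n : ℕ, φ ((n : ℤ) + 1) = g0 * (1 / ((n : ℝ) + 1) ^ β) := by
    intro n
    have hn : ((n : ℤ) + 1) ≠ 0 := by omega
    rw [hφdef]
    simp only
    rw [coord_phi_ne hβ0 hg hg1 hn]
    congr 2
    push_cast
    rw [abs_of_nonneg (by positivity)]
  have hneg : ∀ n : ℕ, φ (-((n : ℤ) + 1)) = g0 * (1 / ((n : ℝ) + 1) ^ β) := by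
    intro n
    have hn : (-((n : ℤ) + 1)) ≠ 0 := by omega
    rw [hφdef]
    simp only
    rw [coord_phi_ne hβ0 hg hg1 hn]
    congr 2
    push_cast
    rw [abs_neg, abs_of_nonneg (by positivity)]
  have hsucc' : ∀ n : ℕ, φ ((n + 1 : ℕ) : ℤ) = g0 * (1 / ((n : ℝ) + 1) ^ β) := by
    intro n
    rw [show ((n + 1 : ℕ) : ℤ) = (n : ℤ) + 1 by push_cast; ring]
    exact hsucc n
  have hshift : Summable (fun n : ℕ => φ ((n + 1 : ℕ) : ℤ)) :=
    (hz.mul_left g0).congr fun n => (hsucc' n).symm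
  have hnat : Summable (fun n : ℕ => φ (n : ℤ)) :=
    (summable_nat_add_iff 1).mp hshift
  have hnegs : Summable (fun n : ℕ => φ (-((n : ℤ) + 1))) :=
    (hz.mul_left g0).congr fun n => (hneg n).symm
  have hsum : Summable φ := Summable.of_nat_of_neg_add_one hnat hnegs
  refine ⟨hsum, ?_⟩
  have ht := tsum_of_nat_of_neg_add_one hnat hnegs
  have htnat : ∑' n : ℕ, φ (n : ℤ) = 1 + g0 * zetaR β := by
    rw [tsum_eq_zero_add' hshift, tsum_congr hsucc', tsum_mul_left,
      show φ ((0 : ℕ) : ℤ) = 1 by exact_mod_cast hφ0]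
    rfl
  have htneg : ∑' n : ℕ, φ (-((n : ℤ) + 1)) = g0 * zetaR β := by
    rw [tsum_congr hneg, tsum_mul_left]
    rfl
  rw [ht, htnat, htneg]
  ring

lemma pi_summable_tsum :
    ∀ (d : ℕ) (g : Fin d → ℤ → ℝ), (∀ j n, 0 ≤ g j n) → (∀ j, Summable (g j)) →
      Summable (fun h : Fin d → ℤ => ∏ j, g j (h j)) ∧
        ∑' h : Fin d → ℤ, ∏ j, g j (h j) = ∏ j, ∑' n, g j n := by
  intro d
  induction d with
  | zero =>
    intro g _ _
    haveI : Finite (Fin 0 → ℤ) := Finite.of_subsingleton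
    refine ⟨Summable.of_finite, ?_⟩
    rw [tsum_eq_single (fun i => i.elim0) (fun b' hb' => absurd (Subsingleton.elim b' _) hb')]
    simp
  | succ n ih =>
    intro g hnn hs
    obtain ⟨hGsum, hGtsum⟩ := ih (fun j => g j.succ) (fun j m => hnn j.succ m)
      (fun j => hs j.succ)
    let e : (ℤ × (Fin n → ℤ)) ≃ (Fin (n + 1) → ℤ) := Fin.consEquiv (fun _ => ℤ)
    have hFG : ∀ p : ℤ × (Fin n → ℤ),
        (∏ j : Fin (n + 1), g j ((e p) j)) = g 0 p.1 * ∏ j : Fin n, g j.succ (p.2 j) := by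
      intro p
      rw [Fin.prod_univ_succ]
      simp [e, Fin.consEquiv]
    have hprodsum : Summable (fun p : ℤ × (Fin n → ℤ) =>
        g 0 p.1 * ∏ j : Fin n, g j.succ (p.2 j)) := by
      have key := Summable.mul_of_nonneg (hs 0) hGsum (fun m => hnn 0 m)
        (fun h => Finset.prod_nonneg fun j _ => hnn j.succ (h j))
      exact key
    have hcomp : Summable ((fun h : Fin (n + 1) → ℤ => ∏ j, g j (h j)) ∘ e) :=
      hprodsum.congr fun p => (hFG p).symm
    refine ⟨e.summable_iff.mp hcomp, ?_⟩
    rw [← e.tsum_eq (fun h : Fin (n + 1) → ℤ => ∏ j, g j (h j))]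
    rw [tsum_congr hFG]
    rw [Summable.tsum_prod' hprodsum (fun b => (hGsum.mul_left (g 0 b)))]
    simp_rw [tsum_mul_left (a := _)]
    rw [tsum_mul_right, Fin.prod_univ_succ, hGtsum]

end


/-- The tail bound: for `c > 1` and `T ≥ 1`,
`∑_{h ≠ 0, r_{β,γ}(h) > T} 1/r_{β,γ}(h)^c ≤ (c/(c+1)) V_d(β,γ) 2^{c−1} T^{1−c}`. -/
theorem tail_sum_rwt_le
    (d : ℕ) (hd : 0 < d) (β : ℝ) (hβ : 1 < β) (c : ℝ) (hc : 1 < c) (T : ℝ) (hT : 1 ≤ T)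
    (γ : ℕ → ℝ) (hγpos : ∀ j, 0 < γ j) (hγle : ∀ j, γ j ≤ 1) :
    (∑' h : {h : Fin d → ℤ // h ≠ 0 ∧ T < rwt d β γ h}, 1 / (rwt d β γ h.1) ^ c) ≤
      c / (c + 1) * Vd d β γ * (2 : ℝ) ^ (c - 1) * T ^ (1 - c) := by
  have hT0 : (0 : ℝ) < T := lt_of_lt_of_le one_pos hT
  obtain ⟨hGsum, hGtsum⟩ := pi_summable_tsum d
    (fun j n => (max 1 (|(n : ℝ)| ^ β / γ j))⁻¹)
    (fun j n => by positivity) (fun j => (coord_main hβ (hγpos j) (hγle j)).1)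
  have hGnn : ∀ h : Fin d → ℤ, 0 ≤ ∏ j : Fin d, (max 1 (|(h j : ℝ)| ^ β / γ j))⁻¹ :=
    fun h => Finset.prod_nonneg fun j _ => by positivity
  have hGr : ∀ h, (∏ j : Fin d, (max 1 (|(h j : ℝ)| ^ β / γ j))⁻¹) = (rwt d β γ h)⁻¹ := by
    intro h
    rw [rwt, ← Finset.prod_inv_distrib]
  have hGtsumA : ∑' h : Fin d → ℤ, ∏ j : Fin d, (max 1 (|(h j : ℝ)| ^ β / γ j))⁻¹
      = ∏ j : Fin d, (1 + 2 * γ j * zetaR β) := by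
    rw [hGtsum]
    exact Finset.prod_congr rfl fun j _ => (coord_main hβ (hγpos j) (hγle j)).2
  have hrpos : ∀ h, 0 < rwt d β γ h :=
    fun h => Finset.prod_pos fun j _ => lt_of_lt_of_le one_pos (le_max_left _ _)
  -- pointwise bound
  have hpt : ∀ (h : Fin d → ℤ), T < rwt d β γ h →
      1 / rwt d β γ h ^ c ≤ T ^ (1 - c) * ∏ j : Fin d, (max 1 (|(h j : ℝ)| ^ β / γ j))⁻¹ := by
    intro h hTr
    have hr := hrpos h
    have h1 : T ^ (c - 1) * rwt d β γ h ≤ rwt d β γ h ^ c := by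
      have e1 : rwt d β γ h ^ c = rwt d β γ h ^ (c - 1) * rwt d β γ h := by
        rw [show c = (c - 1) + 1 by ring, Real.rpow_add hr, Real.rpow_one]
        ring_nf
      rw [e1]
      exact mul_le_mul_of_nonneg_right
        (Real.rpow_le_rpow hT0.le hTr.le (by linarith)) hr.le
    calc 1 / rwt d β γ h ^ c ≤ 1 / (T ^ (c - 1) * rwt d β γ h) := by
          apply one_div_le_one_div_of_le _ h1
          positivity
      _ = T ^ (1 - c) * ∏ j : Fin d, (max 1 (|(h j : ℝ)| ^ β / γ j))⁻¹ := by
          rw [hGr h, show (1 : ℝ) - c = -(c - 1) by ring, Real.rpow_neg hT0.le,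
            one_div, mul_inv]
  have hGS : Summable (fun h : {h : Fin d → ℤ // h ≠ 0 ∧ T < rwt d β γ h} =>
      ∏ j : Fin d, (max 1 (|(h.1 j : ℝ)| ^ β / γ j))⁻¹) := by
    have := hGsum.subtype {h : Fin d → ℤ | h ≠ 0 ∧ T < rwt d β γ h}
    exact this
  have hS1 : Summable (fun h : {h : Fin d → ℤ // h ≠ 0 ∧ T < rwt d β γ h} =>
      T ^ (1 - c) * ∏ j : Fin d, (max 1 (|(h.1 j : ℝ)| ^ β / γ j))⁻¹) := hGS.mul_left _
  have hle : ∀ h : {h : Fin d → ℤ // h ≠ 0 ∧ T < rwt d β γ h},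
      1 / rwt d β γ h.1 ^ c ≤ T ^ (1 - c) * ∏ j : Fin d, (max 1 (|(h.1 j : ℝ)| ^ β / γ j))⁻¹ :=
    fun h => hpt h.1 h.2.2
  have hsum1 : Summable (fun h : {h : Fin d → ℤ // h ≠ 0 ∧ T < rwt d β γ h} =>
      1 / rwt d β γ h.1 ^ c) :=
    Summable.of_nonneg_of_le (fun h => div_nonneg zero_le_one (Real.rpow_nonneg (hrpos h.1).le c)) hle hS1
  have hA0 : (0 : ℝ) ≤ ∏ j : Fin d, (1 + 2 * γ j * zetaR β) :=
    Finset.prod_nonneg fun j _ => by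
      nlinarith [mul_nonneg (hγpos j).le (zetaR_nonneg (β := β))]
  have h2c : (1 : ℝ) ≤ (2 : ℝ) ^ (c - 1) := by
    rw [show (1 : ℝ) = (2 : ℝ) ^ (0 : ℝ) by rw [Real.rpow_zero]]
    exact (Real.rpow_le_rpow_left_iff (by norm_num)).mpr (by linarith)
  have hcc : (1 : ℝ) / 2 ≤ c / (c + 1) := by
    rw [div_le_div_iff₀ (by norm_num) (by linarith)]
    linarith
  have ht0 : (0 : ℝ) ≤ T ^ (1 - c) := Real.rpow_nonneg hT0.le _
  have hkey : (1 : ℝ) ≤ 3 * (c / (c + 1)) * (2 : ℝ) ^ (c - 1) := by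
    nlinarith
  calc (∑' h : {h : Fin d → ℤ // h ≠ 0 ∧ T < rwt d β γ h}, 1 / rwt d β γ h.1 ^ c)
      ≤ ∑' h : {h : Fin d → ℤ // h ≠ 0 ∧ T < rwt d β γ h},
          T ^ (1 - c) * ∏ j : Fin d, (max 1 (|(h.1 j : ℝ)| ^ β / γ j))⁻¹ :=
        Summable.tsum_le_tsum hle hsum1 hS1
    _ = T ^ (1 - c) * ∑' h : {h : Fin d → ℤ // h ≠ 0 ∧ T < rwt d β γ h},
          ∏ j : Fin d, (max 1 (|(h.1 j : ℝ)| ^ β / γ j))⁻¹ := tsum_mul_left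
    _ ≤ T ^ (1 - c) * ∑' h : Fin d → ℤ, ∏ j : Fin d, (max 1 (|(h j : ℝ)| ^ β / γ j))⁻¹ := by
        apply mul_le_mul_of_nonneg_left _ ht0
        exact Summable.tsum_subtype_le _ {h : Fin d → ℤ | h ≠ 0 ∧ T < rwt d β γ h} hGnn hGsum
    _ = T ^ (1 - c) * ∏ j : Fin d, (1 + 2 * γ j * zetaR β) := by rw [hGtsumA]
    _ ≤ c / (c + 1) * Vd d β γ * (2 : ℝ) ^ (c - 1) * T ^ (1 - c) := by
        rw [show Vd d β γ = 3 * ∏ j : Fin d, (1 + 2 * γ j * zetaR β) from rfl]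
        nlinarith [mul_le_mul_of_nonneg_right hkey (mul_nonneg ht0 hA0)]
end
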